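/- arXiv:2311.15135 — 4 statements merged into one kernel-verified Lean document; each statement's English description precedes it below -/
import Mathlib

section
/- If $\Delta$ is the Stanley-Reisner complex of a squarefree weakly polymatroidal ideal $I$ (i.e., $I = I_\Delta$), then the Alexander dual complex $\Delta^\vee$ is vertex decomposable. -/
open MvPolynomial Finset

section Complexes
variable {σ : Type*} [DecidableEq σ]

/-- `Δ` is (the set of faces of) an abstract simplicial complex. -/
def IsSimplicialComplex (Δ : Set (Finset σ)) : Prop :=
  ∀ F ∈ Δ, ∀ G : Finset σ, G ⊆ F → G ∈ Δ

/-- `F` is a facet (maximal face) of `Δ`. -/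
def IsFacet (Δ : Set (Finset σ)) (F : Finset σ) : Prop :=
  F ∈ Δ ∧ ∀ G ∈ Δ, F ⊆ G → G = F

/-- deletion of the vertex `x` from `Δ`. -/
def complexDel (Δ : Set (Finset σ)) (x : σ) : Set (Finset σ) :=
  {G | G ∈ Δ ∧ x ∉ G}

/-- link of the vertex `x` in `Δ`. -/
def complexLink (Δ : Set (Finset σ)) (x : σ) : Set (Finset σ) :=
  {G | G ∈ Δ ∧ x ∉ G ∧ insert x G ∈ Δ}

/-- `x` is a shedding vertex of `Δ`. -/
def IsSheddingVertex (Δ : Set (Finset σ)) (x : σ) : Prop :=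
  ({x} : Finset σ) ∈ Δ ∧ ∀ F, IsFacet (complexDel Δ x) F → IsFacet Δ F

/-- vertex decomposable simplicial complexes. -/
inductive VertexDecomposable : Set (Finset σ) → Prop
  | empty : VertexDecomposable (∅ : Set (Finset σ))
  | simplex (A : Finset σ) : VertexDecomposable {F | F ⊆ A}
  | step (Δ : Set (Finset σ)) (x : σ) (hx : ({x} : Finset σ) ∈ Δ)
      (hdel : VertexDecomposable (complexDel Δ x))
      (hlk : VertexDecomposable (complexLink Δ x))
      (hshed : ∀ F, IsFacet (complexDel Δ x) F → IsFacet Δ F) :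
      VertexDecomposable Δ

/-- Alexander dual of a simplicial complex on a finite vertex set. -/
def dualComplex [Fintype σ] (Δ : Set (Finset σ)) : Set (Finset σ) :=
  {F | Fᶜ ∉ Δ}

end Complexes

section Ideals
variable {σ : Type*} {K : Type*} [Field K]

/-- `I` is a monomial ideal. -/
def IsMonomialIdeal (I : Ideal (MvPolynomial σ K)) : Prop :=
  ∃ T : Set (σ →₀ ℕ), I = Ideal.span ((fun a => (monomial a 1 : MvPolynomial σ K)) '' T)

/-- the exponents of the minimal monomial generators of `I`. -/
def minimalGens (I : Ideal (MvPolynomial σ K)) : Set (σ →₀ ℕ) :=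
  {a | (monomial a 1 : MvPolynomial σ K) ∈ I ∧
    ∀ b : σ →₀ ℕ, b ≤ a → b ≠ a → (monomial b 1 : MvPolynomial σ K) ∉ I}

/-- `I = x_i I₁ + I₂` is a vertex splitting of the monomial ideal `I`. -/
def IsVertexSplitting [DecidableEq σ] (I I₁ I₂ : Ideal (MvPolynomial σ K)) (i : σ) : Prop :=
  (∃ T : Set (σ →₀ ℕ), (∀ a ∈ T, a i = 0) ∧
      I₁ = Ideal.span ((fun a => (monomial a 1 : MvPolynomial σ K)) '' T)) ∧
  (∃ T : Set (σ →₀ ℕ), (∀ a ∈ T, a i = 0) ∧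
      I₂ = Ideal.span ((fun a => (monomial a 1 : MvPolynomial σ K)) '' T)) ∧
  I₂ ≤ I₁ ∧
  I = Ideal.span {X i} * I₁ + I₂ ∧
  minimalGens I = (fun a => Finsupp.single i 1 + a) '' minimalGens I₁ ∪ minimalGens I₂ ∧
  Disjoint ((fun a => Finsupp.single i 1 + a) '' minimalGens I₁) (minimalGens I₂)

/-- vertex splittable monomial ideals. -/
inductive VertexSplittable [DecidableEq σ] : Ideal (MvPolynomial σ K) → Prop
  | bot : VertexSplittable (⊥ : Ideal (MvPolynomial σ K))
  | top : VertexSplittable (⊤ : Ideal (MvPolynomial σ K))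
  | split (I I₁ I₂ : Ideal (MvPolynomial σ K)) (i : σ)
      (h₁ : VertexSplittable I₁) (h₂ : VertexSplittable I₂)
      (hsplit : IsVertexSplitting I I₁ I₂ i) : VertexSplittable I

/-- the Stanley–Reisner ideal of the Alexander dual of `Δ`, relative to the
vertex set `W`: it is generated by the monomials `∏_{i ∈ A} x_i` with
`A ⊆ W` and `W \ A ∉ Δ`. -/
noncomputable def dualIdealOn (K : Type*) [Field K] [DecidableEq σ] (W : Finset σ) (Δ : Set (Finset σ)) :
    Ideal (MvPolynomial σ K) :=
  Ideal.span {m | ∃ A : Finset σ, A ⊆ W ∧ W \ A ∉ Δ ∧ m = ∏ i ∈ A, (X i : MvPolynomial σ K)}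

end Ideals

section Normal
variable {R : Type*} [CommRing R]

/-- `x` is integral over the ideal `J`: it satisfies an equation
`x^k + a₁ x^{k-1} + ⋯ + a_k = 0` with `aᵢ ∈ Jⁱ`. -/
def IsIntegralOverIdeal (J : Ideal R) (x : R) : Prop :=
  ∃ (k : ℕ) (a : ℕ → R), 0 < k ∧ (∀ i ∈ Finset.Icc 1 k, a i ∈ J ^ i) ∧
    x ^ k + ∑ i ∈ Finset.Icc 1 k, a i * x ^ (k - i) = 0

/-- the ideal `J` is integrally closed. -/
def Ideal.IsIntegrallyClosedIdeal (J : Ideal R) : Prop :=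
  ∀ x : R, IsIntegralOverIdeal J x → x ∈ J

/-- the ideal `I` is normal: all its powers are integrally closed. -/
def Ideal.IsNormalIdeal (I : Ideal R) : Prop :=
  ∀ s : ℕ, 1 ≤ s → (I ^ s).IsIntegrallyClosedIdeal

end Normal

section Graphs
variable {V : Type*} [DecidableEq V]

/-- the independence complex of a graph. -/
def indepComplex (G : SimpleGraph V) : Set (Finset V) :=
  {F | ∀ i ∈ F, ∀ j ∈ F, ¬ G.Adj i j}

/-- `C` is a vertex cover of `G`. -/
def IsVertexCover (G : SimpleGraph V) (C : Finset V) : Prop :=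
  ∀ i j : V, G.Adj i j → i ∈ C ∨ j ∈ C

/-- `C` is a minimal vertex cover of `G`. -/
def IsMinimalVertexCover (G : SimpleGraph V) (C : Finset V) : Prop :=
  IsVertexCover G C ∧ ∀ D ⊆ C, IsVertexCover G D → D = C

/-- the cover ideal of a graph. -/
noncomputable def coverIdeal (K : Type*) [Field K] (G : SimpleGraph V) : Ideal (MvPolynomial V K) :=
  Ideal.span {m | ∃ C : Finset V, IsMinimalVertexCover G C ∧
    m = ∏ i ∈ C, (X i : MvPolynomial V K)}

/-- a graph is chordal if every cycle of length at least `4` has a chord. -/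
def IsChordal (G : SimpleGraph V) : Prop :=
  ∀ (v : V) (c : G.Walk v v), c.IsCycle → 4 ≤ c.length →
    ∃ i j : V, i ∈ c.support ∧ j ∈ c.support ∧ G.Adj i j ∧ s(i, j) ∉ c.edges

end Graphs


/-- weakly polymatroidal monomial ideals in `K[x₁,…,xₙ]`. -/
def WeaklyPolymatroidal {n : ℕ} {K : Type*} [Field K]
    (I : Ideal (MvPolynomial (Fin n) K)) : Prop :=
  ∀ a ∈ minimalGens I, ∀ b ∈ minimalGens I, ∀ i : Fin n,
    (∀ k : Fin n, k < i → a k = b k) → a i < b i →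
      ∃ j : Fin n, i < j ∧ 1 ≤ a j ∧
        a + Finsupp.single i 1 - Finsupp.single j 1 ∈ minimalGens I


section AuxStmt5
variable {n : ℕ}


/-- the complex whose faces are the sets disjoint from some member of `𝒮`. -/
def famComplex (𝒮 : Finset (Finset (Fin n))) : Set (Finset (Fin n)) :=
  {F | ∃ S ∈ 𝒮, F ∩ S = ∅}

lemma lemA : ∀ (N : ℕ) (𝒮 : Finset (Finset (Fin n))), 𝒮.card ≤ N →
    (∀ S ∈ 𝒮, ∀ T ∈ 𝒮, S ⊆ T → S = T) →
    (∀ S ∈ 𝒮, ∀ T ∈ 𝒮, ∀ i : Fin n, (∀ k, k < i → (k ∈ S ↔ k ∈ T)) → i ∉ S → i ∈ T →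
      ∃ j : Fin n, i < j ∧ j ∈ S ∧ (insert i S).erase j ∈ 𝒮) →
    VertexDecomposable (famComplex 𝒮) := by
  intro N
  induction N with
  | zero =>
      intro 𝒮 hcard _ _
      have h0 : 𝒮 = ∅ := Finset.card_eq_zero.mp (Nat.le_zero.mp hcard)
      have : famComplex 𝒮 = (∅ : Set (Finset (Fin n))) := by
        ext F; simp [famComplex, h0]
      rw [this]; exact VertexDecomposable.empty
  | succ N ih =>
      intro 𝒮 hcard anti exch
      classical
      rcases Finset.eq_empty_or_nonempty 𝒮 with h0 | ⟨S₀, hS₀⟩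
      · have : famComplex 𝒮 = (∅ : Set (Finset (Fin n))) := by
          ext F; simp [famComplex, h0]
        rw [this]; exact VertexDecomposable.empty
      by_cases hsing : ∀ T ∈ 𝒮, T = S₀
      · have : famComplex 𝒮 = {F : Finset (Fin n) | F ⊆ Finset.univ \ S₀} := by
          ext F
          simp only [famComplex, Set.mem_setOf_eq]
          constructor
          · rintro ⟨S, hS, hFS⟩
            rw [hsing S hS] at hFS
            rw [Finset.subset_sdiff]
            exact ⟨Finset.subset_univ F, Finset.disjoint_iff_inter_eq_empty.mpr hFS⟩
          · intro hF
            refine ⟨S₀, hS₀, ?_⟩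
            rw [Finset.subset_sdiff] at hF
            exact Finset.disjoint_iff_inter_eq_empty.mp hF.2
        rw [this]; exact VertexDecomposable.simplex _
      -- main case
      push_neg at hsing
      obtain ⟨T₀, hT₀mem, hT₀ne⟩ := hsing
      -- the set of "free" vertices
      set P : Fin n → Prop := fun k => (∃ S ∈ 𝒮, k ∈ S) ∧ (∃ T ∈ 𝒮, k ∉ T) with hP
      set D : Finset (Fin n) := Finset.univ.filter P with hD
      have hDne : D.Nonempty := by
        -- S₀ ≠ T₀, both in 𝒮; get x in one not the other
        have hne : ¬ S₀ ⊆ T₀ ∨ ¬ T₀ ⊆ S₀ := by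
          by_contra h
          push_neg at h
          exact hT₀ne (Finset.Subset.antisymm h.2 h.1)
        rcases hne with h | h
        · obtain ⟨x, hx1, hx2⟩ := Finset.not_subset.mp h
          exact ⟨x, by simp [hD, hP]; exact ⟨⟨S₀, hS₀, hx1⟩, ⟨T₀, hT₀mem, hx2⟩⟩⟩
        · obtain ⟨x, hx1, hx2⟩ := Finset.not_subset.mp h
          exact ⟨x, by simp [hD, hP]; exact ⟨⟨T₀, hT₀mem, hx1⟩, ⟨S₀, hS₀, hx2⟩⟩⟩
      set i : Fin n := D.min' hDne with hi
      have hiD : i ∈ D := D.min'_mem hDne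
      have hiP : P i := (Finset.mem_filter.mp hiD).2
      obtain ⟨⟨Si, hSi, hiSi⟩, ⟨Ti, hTi, hiTi⟩⟩ := hiP
      have hmin : ∀ k, k < i → ∀ S ∈ 𝒮, ∀ T ∈ 𝒮, (k ∈ S ↔ k ∈ T) := by
        intro k hk S hS T hT
        have hkD : k ∉ D := fun hkD => absurd (D.min'_le k hkD) (not_le.mpr hk)
        simp only [hD, Finset.mem_filter, Finset.mem_univ, true_and, hP] at hkD
        push_neg at hkD
        exact ⟨fun hkS => hkD ⟨S, hS, hkS⟩ T hT, fun hkT => hkD ⟨T, hT, hkT⟩ S hS⟩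
      have empt : ∀ (F S : Finset (Fin n)), F ∩ S = ∅ ↔ ∀ k, k ∈ F → k ∉ S := by
        intro F S
        rw [Finset.eq_empty_iff_forall_notMem]
        simp [Finset.mem_inter, not_and]
      set 𝒮₁ : Finset (Finset (Fin n)) := 𝒮.filter (fun S => i ∈ S) with h𝒮₁
      set 𝒮₂ : Finset (Finset (Fin n)) := 𝒮.filter (fun S => i ∉ S) with h𝒮₂
      set 𝒯 : Finset (Finset (Fin n)) := 𝒮₂.image (insert i) with h𝒯
      have cover : ∀ S ∈ 𝒮, ∃ S' ∈ 𝒮₁, S' ⊆ insert i S := by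
        intro S hS
        by_cases hiS : i ∈ S
        · exact ⟨S, Finset.mem_filter.mpr ⟨hS, hiS⟩, Finset.subset_insert _ _⟩
        · obtain ⟨j, hij, hjS, hU⟩ :=
            exch S hS Si hSi i (fun k hk => hmin k hk S hS Si hSi) hiS hiSi
          refine ⟨(insert i S).erase j, Finset.mem_filter.mpr ⟨hU, ?_⟩,
            Finset.erase_subset _ _⟩
          exact Finset.mem_erase.mpr ⟨hij.ne, Finset.mem_insert_self i S⟩
      have deleq : complexDel (famComplex 𝒮) i = famComplex 𝒮₁ := by
        ext F
        simp only [complexDel, famComplex, Set.mem_setOf_eq]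
        constructor
        · rintro ⟨⟨S, hS, hFS⟩, hiF⟩
          obtain ⟨S', hS', hsub⟩ := cover S hS
          refine ⟨S', hS', (empt _ _).mpr ?_⟩
          intro k hkF hkS'
          rcases Finset.mem_insert.mp (hsub hkS') with rfl | hkS
          · exact hiF hkF
          · exact (empt _ _).mp hFS k hkF hkS
        · rintro ⟨S, hS, hFS⟩
          have hiS : i ∈ S := (Finset.mem_filter.mp hS).2
          exact ⟨⟨S, (Finset.mem_filter.mp hS).1, hFS⟩,
            fun h => (empt _ _).mp hFS i h hiS⟩
      have linkeq : complexLink (famComplex 𝒮) i = famComplex 𝒯 := by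
        ext F
        simp only [complexLink, famComplex, Set.mem_setOf_eq]
        constructor
        · rintro ⟨-, hiF, ⟨S, hS, hFS⟩⟩
          have hiS : i ∉ S := fun h =>
            (empt _ _).mp hFS i (Finset.mem_insert_self i F) h
          refine ⟨insert i S, Finset.mem_image.mpr
            ⟨S, Finset.mem_filter.mpr ⟨hS, hiS⟩, rfl⟩, (empt _ _).mpr ?_⟩
          intro k hkF hkS
          rcases Finset.mem_insert.mp hkS with rfl | hkS'
          · exact hiF hkF
          · exact (empt _ _).mp hFS k (Finset.mem_insert_of_mem hkF) hkS'
        · rintro ⟨S', hS', hFS'⟩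
          obtain ⟨S, hS2, rfl⟩ := Finset.mem_image.mp hS'
          have hS : S ∈ 𝒮 := (Finset.mem_filter.mp hS2).1
          have hiS : i ∉ S := (Finset.mem_filter.mp hS2).2
          have hiF : i ∉ F := fun h =>
            (empt _ _).mp hFS' i h (Finset.mem_insert_self i S)
          have hFS : F ∩ S = ∅ := (empt _ _).mpr
            (fun k hkF hkS => (empt _ _).mp hFS' k hkF (Finset.mem_insert_of_mem hkS))
          refine ⟨⟨S, hS, hFS⟩, hiF, ⟨S, hS, (empt _ _).mpr ?_⟩⟩
          intro k hk hkS
          rcases Finset.mem_insert.mp hk with rfl | hkF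
          · exact hiS hkS
          · exact (empt _ _).mp hFS k hkF hkS
      have card₁ : 𝒮₁.card ≤ N := by
        have hss : 𝒮₁ ⊂ 𝒮 := by
          rw [Finset.ssubset_iff_of_subset (Finset.filter_subset _ _)]
          exact ⟨Ti, hTi, fun h => hiTi (Finset.mem_filter.mp h).2⟩
        have := Finset.card_lt_card hss
        omega
      have card𝒯 : 𝒯.card ≤ N := by
        have h1 : 𝒯.card ≤ 𝒮₂.card := Finset.card_image_le
        have hss : 𝒮₂ ⊂ 𝒮 := by
          rw [Finset.ssubset_iff_of_subset (Finset.filter_subset _ _)]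
          exact ⟨Si, hSi, fun h => (Finset.mem_filter.mp h).2 hiSi⟩
        have := Finset.card_lt_card hss
        omega
      have anti₁ : ∀ S ∈ 𝒮₁, ∀ T ∈ 𝒮₁, S ⊆ T → S = T := fun S hS T hT =>
        anti S (Finset.mem_filter.mp hS).1 T (Finset.mem_filter.mp hT).1
      have exch₁ : ∀ S ∈ 𝒮₁, ∀ T ∈ 𝒮₁, ∀ i' : Fin n,
          (∀ k, k < i' → (k ∈ S ↔ k ∈ T)) → i' ∉ S → i' ∈ T →
          ∃ j : Fin n, i' < j ∧ j ∈ S ∧ (insert i' S).erase j ∈ 𝒮₁ := by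
        intro S hS' T hT' i' hlt hi'S hi'T
        have hS := (Finset.mem_filter.mp hS').1
        have hiS := (Finset.mem_filter.mp hS').2
        have hT := (Finset.mem_filter.mp hT').1
        obtain ⟨j, h1, h2, h3⟩ := exch S hS T hT i' hlt hi'S hi'T
        have hi'D : i' ∈ D := by
          simp only [hD, Finset.mem_filter, Finset.mem_univ, true_and, hP]
          exact ⟨⟨T, hT, hi'T⟩, ⟨S, hS, hi'S⟩⟩
        have hii' : i < i' := lt_of_le_of_ne (D.min'_le i' hi'D)
          (fun h => hi'S (h ▸ hiS))
        refine ⟨j, h1, h2, Finset.mem_filter.mpr ⟨h3, ?_⟩⟩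
        exact Finset.mem_erase.mpr ⟨(lt_trans hii' h1).ne,
          Finset.mem_insert_of_mem hiS⟩
      have anti𝒯 : ∀ S' ∈ 𝒯, ∀ T' ∈ 𝒯, S' ⊆ T' → S' = T' := by
        intro S' hS' T' hT' hsub
        obtain ⟨S, hS2, rfl⟩ := Finset.mem_image.mp hS'
        obtain ⟨T, hT2, rfl⟩ := Finset.mem_image.mp hT'
        have hiS := (Finset.mem_filter.mp hS2).2
        have hST : S ⊆ T := fun k hk =>
          (Finset.mem_insert.mp (hsub (Finset.mem_insert_of_mem hk))).resolve_left
            (fun h => hiS (h ▸ hk))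
        rw [anti S (Finset.mem_filter.mp hS2).1 T (Finset.mem_filter.mp hT2).1 hST]
      have exch𝒯 : ∀ S' ∈ 𝒯, ∀ T' ∈ 𝒯, ∀ i' : Fin n,
          (∀ k, k < i' → (k ∈ S' ↔ k ∈ T')) → i' ∉ S' → i' ∈ T' →
          ∃ j : Fin n, i' < j ∧ j ∈ S' ∧ (insert i' S').erase j ∈ 𝒯 := by
        intro S' hS' T' hT' i' hlt hi'S' hi'T'
        obtain ⟨S, hS2, rfl⟩ := Finset.mem_image.mp hS'
        obtain ⟨T, hT2, rfl⟩ := Finset.mem_image.mp hT'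
        have hS : S ∈ 𝒮 := (Finset.mem_filter.mp hS2).1
        have hiS : i ∉ S := (Finset.mem_filter.mp hS2).2
        have hT : T ∈ 𝒮 := (Finset.mem_filter.mp hT2).1
        have hiT : i ∉ T := (Finset.mem_filter.mp hT2).2
        have hii' : i ≠ i' := fun h => hi'S' (h ▸ Finset.mem_insert_self i S)
        have hi'S : i' ∉ S := fun h => hi'S' (Finset.mem_insert_of_mem h)
        have hi'T : i' ∈ T := (Finset.mem_insert.mp hi'T').resolve_left
          (fun h => hii' h.symm)
        have hlt' : ∀ k, k < i' → (k ∈ S ↔ k ∈ T) := by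
          intro k hk
          have hk' := hlt k hk
          constructor
          · intro hkS
            rcases Finset.mem_insert.mp (hk'.mp (Finset.mem_insert_of_mem hkS))
              with rfl | h
            · exact absurd hkS hiS
            · exact h
          · intro hkT
            rcases Finset.mem_insert.mp (hk'.mpr (Finset.mem_insert_of_mem hkT))
              with rfl | h
            · exact absurd hkT hiT
            · exact h
        obtain ⟨j, h1, h2, h3⟩ := exch S hS T hT i' hlt' hi'S hi'T
        have hij : i ≠ j := fun h => hiS (h ▸ h2)
        refine ⟨j, h1, Finset.mem_insert_of_mem h2, ?_⟩
        have hiU : i ∉ (insert i' S).erase j := by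
          intro h
          rcases Finset.mem_insert.mp (Finset.mem_of_mem_erase h) with h' | h'
          exacts [hii' h', hiS h']
        have heq : (insert i' (insert i S)).erase j
            = insert i ((insert i' S).erase j) := by
          ext k
          simp only [Finset.mem_erase, Finset.mem_insert]
          constructor
          · rintro ⟨hkj, rfl | rfl | hk⟩
            exacts [Or.inr ⟨hkj, Or.inl rfl⟩, Or.inl rfl, Or.inr ⟨hkj, Or.inr hk⟩]
          · rintro (rfl | ⟨hkj, rfl | hk⟩)
            exacts [⟨hij, Or.inr (Or.inl rfl)⟩, ⟨hkj, Or.inl rfl⟩,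
              ⟨hkj, Or.inr (Or.inr hk)⟩]
        rw [heq]
        exact Finset.mem_image.mpr ⟨_, Finset.mem_filter.mpr ⟨h3, hiU⟩, rfl⟩
      refine VertexDecomposable.step _ i ?_ ?_ ?_ ?_
      · exact ⟨Ti, hTi, (empt _ _).mpr
          (fun k hk => by rwa [Finset.mem_singleton.mp hk])⟩
      · rw [deleq]; exact ih 𝒮₁ card₁ anti₁ exch₁
      · rw [linkeq]; exact ih 𝒯 card𝒯 anti𝒯 exch𝒯
      · intro F hF
        rw [deleq] at hF
        obtain ⟨⟨S, hS1, hFS⟩, hmax⟩ := hF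
        have hS : S ∈ 𝒮 := (Finset.mem_filter.mp hS1).1
        have hScin : ∀ 𝒰 : Finset (Finset (Fin n)), S ∈ 𝒰 →
            (Finset.univ \ S) ∈ famComplex 𝒰 := by
          intro 𝒰 h𝒰
          exact ⟨S, h𝒰, (empt _ _).mpr (fun k hk => (Finset.mem_sdiff.mp hk).2)⟩
        have hFsub : F ⊆ Finset.univ \ S := Finset.subset_sdiff.mpr
          ⟨Finset.subset_univ F, Finset.disjoint_iff_inter_eq_empty.mpr hFS⟩
        have hFeq : Finset.univ \ S = F := hmax _ (hScin 𝒮₁ hS1) hFsub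
        constructor
        · rw [← hFeq]; exact hScin 𝒮 hS
        · intro G hG hFG
          obtain ⟨T, hT, hGT⟩ := hG
          have hGsub : G ⊆ Finset.univ \ T := Finset.subset_sdiff.mpr
            ⟨Finset.subset_univ G, Finset.disjoint_iff_inter_eq_empty.mpr hGT⟩
          have hTS : T ⊆ S := by
            intro t ht
            by_contra hts
            have htF : t ∈ F := hFeq ▸ Finset.mem_sdiff.mpr ⟨Finset.mem_univ t, hts⟩
            exact (Finset.mem_sdiff.mp (hGsub (hFG htF))).2 ht
          have hTSeq : T = S := anti T hT S hS hTS
          refine Finset.Subset.antisymm ?_ hFG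
          rw [← hFeq, ← hTSeq]
          exact hGsub


variable {K : Type*} [Field K]

/-- the exponent vector of the squarefree monomial with support `G`. -/
noncomputable def indF (G : Finset (Fin n)) : Fin n →₀ ℕ := ∑ i ∈ G, Finsupp.single i 1

lemma indF_apply (G : Finset (Fin n)) (k : Fin n) :
    indF G k = if k ∈ G then 1 else 0 := by
  classical
  rw [indF, Finset.sum_apply']
  by_cases hk : k ∈ G
  · rw [if_pos hk, Finset.sum_eq_single k (fun b _ hb => Finsupp.single_eq_of_ne' hb)
      (fun h => absurd hk h)]
    simp
  · rw [if_neg hk]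
    exact Finset.sum_eq_zero (fun b hb => Finsupp.single_eq_of_ne' (fun h => hk (h ▸ hb)))

lemma prod_X_eq (G : Finset (Fin n)) :
    (∏ i ∈ G, (X i : MvPolynomial (Fin n) K)) = monomial (indF G) 1 := by
  classical
  induction G using Finset.induction with
  | empty => simp [indF]
  | insert a s hx ih =>
      rw [Finset.prod_insert hx, ih]
      rw [show indF (insert a s) = Finsupp.single a 1 + indF s from
        by rw [indF, indF, Finset.sum_insert hx]]
      rw [X, monomial_mul, one_mul]

lemma exists_minimal (I : Ideal (MvPolynomial (Fin n) K)) :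
    ∀ (m : Fin n →₀ ℕ), (monomial m 1 : MvPolynomial (Fin n) K) ∈ I →
      ∃ a ∈ minimalGens I, a ≤ m := by
  have : ∀ (d : ℕ) (m : Fin n →₀ ℕ), (∑ k, m k) ≤ d →
      (monomial m 1 : MvPolynomial (Fin n) K) ∈ I → ∃ a ∈ minimalGens I, a ≤ m := by
    intro d
    induction d with
    | zero =>
        intro m hd hm
        have hm0 : m = 0 := by
          ext k
          have := Finset.sum_eq_zero_iff.mp (Nat.le_zero.mp hd) k (Finset.mem_univ k)
          simpa using this
        refine ⟨m, ⟨hm, ?_⟩, le_refl m⟩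
        intro b hb hbne
        exact absurd (le_antisymm hb (hm0 ▸ bot_le)) hbne
    | succ d ih =>
        intro m hd hm
        by_cases hmin : ∀ b : Fin n →₀ ℕ, b ≤ m → b ≠ m →
            (monomial b 1 : MvPolynomial (Fin n) K) ∉ I
        · exact ⟨m, ⟨hm, hmin⟩, le_refl m⟩
        · push_neg at hmin
          obtain ⟨b, hbm, hbne, hbI⟩ := hmin
          have hlt : (∑ k, b k) < ∑ k, m k := by
            apply Finset.sum_lt_sum (fun k _ => hbm k)
            by_contra h
            push_neg at h
            exact hbne (Finsupp.ext (fun k => le_antisymm (hbm k)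
              (h k (Finset.mem_univ k))))
          obtain ⟨a, ha, hab⟩ := ih b (by omega) hbI
          exact ⟨a, ha, le_trans hab hbm⟩
  intro m hm
  exact this (∑ k, m k) m (le_refl _) hm

lemma mem_of_minimal (I : Ideal (MvPolynomial (Fin n) K)) {a m : Fin n →₀ ℕ}
    (ha : a ∈ minimalGens I) (ham : a ≤ m) :
    (monomial m 1 : MvPolynomial (Fin n) K) ∈ I := by
  have : (monomial m 1 : MvPolynomial (Fin n) K)
      = monomial (m - a) 1 * monomial a 1 := by
    rw [monomial_mul, one_mul, tsub_add_cancel_of_le ham]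
  rw [this]
  exact Ideal.mul_mem_left _ _ ha.1


end AuxStmt5

/-- if `Δ` is the Stanley–Reisner complex of a squarefree weakly
polymatroidal ideal `I`, then `Δ^∨` is vertex decomposable. -/
theorem stmt5 {n : ℕ} {K : Type*} [Field K]
    (I : Ideal (MvPolynomial (Fin n) K)) (hI : IsMonomialIdeal I)
    (hsf : ∀ a ∈ minimalGens I, ∀ k : Fin n, a k ≤ 1)
    (hwp : WeaklyPolymatroidal I)
    (Δ : Set (Finset (Fin n)))
    (hΔ : Δ = {F : Finset (Fin n) | (∏ i ∈ F, (X i : MvPolynomial (Fin n) K)) ∉ I}) :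
    VertexDecomposable (dualComplex Δ) := by
  classical
  subst hΔ
  set 𝒮 : Finset (Finset (Fin n)) :=
    Set.Finite.toFinset
      (Set.toFinite {S : Finset (Fin n) | ∃ a ∈ minimalGens I, a.support = S}) with h𝒮
  have mem𝒮 : ∀ S, S ∈ 𝒮 ↔ ∃ a ∈ minimalGens I, a.support = S := by
    intro S; rw [h𝒮, Set.Finite.mem_toFinset]; rfl
  have key : ∀ F : Finset (Fin n),
      (monomial (indF F) 1 : MvPolynomial (Fin n) K) ∈ I ↔ ∃ S ∈ 𝒮, S ⊆ F := by
    intro F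
    constructor
    · intro h
      obtain ⟨a, ha, haF⟩ := exists_minimal I _ h
      refine ⟨a.support, (mem𝒮 _).mpr ⟨a, ha, rfl⟩, ?_⟩
      intro k hk
      have h1 := Finsupp.mem_support_iff.mp hk
      have h2 := haF k
      rw [indF_apply] at h2
      by_contra hkF
      rw [if_neg hkF] at h2
      omega
    · rintro ⟨S, hS, hSF⟩
      obtain ⟨a, ha, rfl⟩ := (mem𝒮 S).mp hS
      apply mem_of_minimal I ha
      rw [Finsupp.le_def]
      intro k
      rw [indF_apply]
      by_cases hk : k ∈ a.support
      · rw [if_pos (hSF hk)]; exact hsf a ha k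
      · rw [Finsupp.notMem_support_iff.mp hk]; exact Nat.zero_le _
  have dc : dualComplex
        {F : Finset (Fin n) | (∏ i ∈ F, (X i : MvPolynomial (Fin n) K)) ∉ I}
      = famComplex 𝒮 := by
    ext F
    simp only [dualComplex, famComplex, Set.mem_setOf_eq, not_not]
    rw [prod_X_eq, key]
    constructor
    · rintro ⟨S, hS, hsub⟩
      refine ⟨S, hS, Finset.eq_empty_iff_forall_notMem.mpr ?_⟩
      intro k hk
      have := hsub (Finset.mem_inter.mp hk).2
      exact (Finset.mem_compl.mp this) (Finset.mem_inter.mp hk).1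
    · rintro ⟨S, hS, hFS⟩
      refine ⟨S, hS, ?_⟩
      intro k hk
      rw [Finset.mem_compl]
      intro hkF
      exact (Finset.eq_empty_iff_forall_notMem.mp hFS k)
        (Finset.mem_inter.mpr ⟨hkF, hk⟩)
  have anti : ∀ S ∈ 𝒮, ∀ T ∈ 𝒮, S ⊆ T → S = T := by
    intro S hS T hT hsub
    obtain ⟨a, ha, rfl⟩ := (mem𝒮 S).mp hS
    obtain ⟨b, hb, rfl⟩ := (mem𝒮 T).mp hT
    have hab : a ≤ b := by
      rw [Finsupp.le_def]
      intro k
      by_cases hk : k ∈ a.support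
      · have h1 := hsf a ha k
        have h2 := Finsupp.mem_support_iff.mp (hsub hk)
        omega
      · rw [Finsupp.notMem_support_iff.mp hk]; exact Nat.zero_le _
    by_cases h : a = b
    · rw [h]
    · exact absurd ha.1 (hb.2 a hab h)
  have exch : ∀ S ∈ 𝒮, ∀ T ∈ 𝒮, ∀ i : Fin n,
      (∀ k, k < i → (k ∈ S ↔ k ∈ T)) → i ∉ S → i ∈ T →
      ∃ j, i < j ∧ j ∈ S ∧ (insert i S).erase j ∈ 𝒮 := by
    intro S hS T hT i hlt hiS hiT
    obtain ⟨a, ha, rfl⟩ := (mem𝒮 S).mp hS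
    obtain ⟨b, hb, rfl⟩ := (mem𝒮 T).mp hT
    have h1 : ∀ k : Fin n, k < i → a k = b k := by
      intro k hk
      have hiff := hlt k hk
      have ha1 := hsf a ha k
      have hb1 := hsf b hb k
      simp only [Finsupp.mem_support_iff] at hiff
      omega
    have h2 : a i < b i := by
      have h3 := Finsupp.notMem_support_iff.mp hiS
      have h4 := Finsupp.mem_support_iff.mp hiT
      omega
    obtain ⟨j, hij, haj, hc⟩ := hwp a ha b hb i h1 h2
    have haj1 : a j = 1 := le_antisymm (hsf a ha j) haj
    have hai : a i = 0 := Finsupp.notMem_support_iff.mp hiS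
    refine ⟨j, hij, Finsupp.mem_support_iff.mpr (by omega), ?_⟩
    rw [mem𝒮]
    refine ⟨_, hc, ?_⟩
    ext k
    have hval : ((a + Finsupp.single i 1 - Finsupp.single j 1 : Fin n →₀ ℕ)) k
        = a k + (Finsupp.single i 1 : Fin n →₀ ℕ) k
          - (Finsupp.single j 1 : Fin n →₀ ℕ) k := by
      rw [Finsupp.tsub_apply, Finsupp.add_apply]
    rw [Finsupp.mem_support_iff, hval, Finset.mem_erase, Finset.mem_insert,
      Finsupp.mem_support_iff, Finsupp.single_apply, Finsupp.single_apply]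
    rcases eq_or_ne k i with rfl | hki
    · have hkj : k ≠ j := hij.ne
      rw [if_pos rfl, if_neg (Ne.symm hkj)]
      simp [hkj, hai]
    · rcases eq_or_ne k j with rfl | hkj
      · rw [if_neg (Ne.symm hki), if_pos rfl]
        simp [hki, haj1, Ne.symm hki]
      · rw [if_neg (Ne.symm hki), if_neg (Ne.symm hkj)]
        simp [hki, hkj]
  rw [dc]
  exact lemA 𝒮.card 𝒮 le_rfl anti exch
end

section
/- Let $I \subset K[x_1,\dots,x_n]$ be a squarefree monomial ideal and $\chi$ a colouring of $I$ given by a partition $V_1 \cup \cdots \cup V_s$ of the variables with $|V_i \setminus \mathrm{supp}(u)| \le 1$ for every squarefree monomial $u \in I$. Then the ideal $I_\chi = (u\, w_u : u \in \mathrm{SMon}(I))$, with $w_u = \prod_{V_j \not\subseteq \mathrm{supp}(u)} y_j$, is a vertex splittable ideal. -/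
open MvPolynomial Finset

namespace Stmt13Aux

open MvPolynomial Finsupp

variable {τ : Type*} [DecidableEq τ] {K : Type*} [Field K]

/-- indicator finsupp of a finset -/
noncomputable def dOf (F : Finset τ) : τ →₀ ℕ := ∑ i ∈ F, Finsupp.single i 1

lemma dOf_apply (F : Finset τ) (j : τ) : dOf F j = if j ∈ F then 1 else 0 := by
  classical
  rw [dOf, Finsupp.finset_sum_apply]
  simp only [Finsupp.single_apply]
  rw [Finset.sum_ite_eq' F j (fun _ => 1)]

lemma dOf_le_one (F : Finset τ) (j : τ) : dOf F j ≤ 1 := by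
  rw [dOf_apply]; split <;> simp

lemma dOf_le_dOf_iff {F G : Finset τ} : dOf F ≤ dOf G ↔ F ⊆ G := by
  constructor
  · intro h i hi
    have := h i
    rw [dOf_apply, dOf_apply, if_pos hi] at this
    by_contra hG; rw [if_neg hG] at this; omega
  · intro h i
    rw [dOf_apply, dOf_apply]
    by_cases hi : i ∈ F
    · rw [if_pos hi, if_pos (h hi)]
    · simp [hi]

lemma dOf_inj {F G : Finset τ} (h : dOf F = dOf G) : F = G :=
  Finset.Subset.antisymm (dOf_le_dOf_iff.1 h.le) (dOf_le_dOf_iff.1 h.ge)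

lemma prod_X_eq (F : Finset τ) :
    (∏ i ∈ F, (X i : MvPolynomial τ K)) = monomial (dOf F) 1 := by
  classical
  induction F using Finset.induction_on with
  | empty => simp [dOf]
  | insert a F' h ih =>
      rw [Finset.prod_insert h, ih, X, monomial_mul, one_mul, dOf, dOf,
        Finset.sum_insert h]

/-- minimal elements of a set of exponents -/
def MinT (T : Set (τ →₀ ℕ)) : Set (τ →₀ ℕ) := {a | a ∈ T ∧ ∀ t ∈ T, t ≤ a → t = a}

lemma mem_span_mono {T : Set (τ →₀ ℕ)} {b : τ →₀ ℕ} :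
    (monomial b (1 : K)) ∈ Ideal.span ((fun a => (monomial a 1 : MvPolynomial τ K)) '' T) ↔
      ∃ t ∈ T, t ≤ b := by
  rw [mem_ideal_span_monomial_image]
  simp [support_monomial]

lemma mg_eq (T : Set (τ →₀ ℕ)) :
    minimalGens (Ideal.span ((fun a => (monomial a 1 : MvPolynomial τ K)) '' T)) = MinT T := by
  ext a
  constructor
  · rintro ⟨hmem, hmin⟩
    obtain ⟨t, htT, hta⟩ := mem_span_mono.1 hmem
    have hteq : t = a := by
      by_contra hne
      exact hmin t hta hne (mem_span_mono.2 ⟨t, htT, le_refl t⟩)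
    subst hteq
    refine ⟨htT, fun t' ht'T ht'le => ?_⟩
    by_contra hne
    exact hmin t' ht'le hne (mem_span_mono.2 ⟨t', ht'T, le_refl t'⟩)
  · rintro ⟨haT, hamin⟩
    refine ⟨mem_span_mono.2 ⟨a, haT, le_refl a⟩, fun b hba hne hb => ?_⟩
    obtain ⟨t, htT, htb⟩ := mem_span_mono.1 hb
    have := hamin t htT (le_trans htb hba)
    subst this
    exact hne (le_antisymm hba htb)

lemma le_of_le_add_single {j : τ} {a b : τ →₀ ℕ} (ha : a j = 0)
    (h : a ≤ Finsupp.single j 1 + b) : a ≤ b := by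
  intro i
  by_cases hij : i = j
  · subst hij; simp [ha]
  · have := h i
    simpa [Finsupp.single_apply, Ne.symm hij] using this

lemma minT_split (j : τ) (T₁ T₂ : Set (τ →₀ ℕ))
    (h₁ : ∀ t ∈ T₁, t j = 0) (h₂ : ∀ t ∈ T₂, t j = 0)
    (hle : ∀ t₂ ∈ T₂, ∃ t₁ ∈ T₁, t₁ ≤ t₂)
    (hdisj : ∀ t, t ∈ T₁ → t ∈ T₂ → False) :
    MinT ((fun t => Finsupp.single j 1 + t) '' T₁ ∪ T₂) =
      (fun t => Finsupp.single j 1 + t) '' MinT T₁ ∪ MinT T₂ := by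
  have keyj : ∀ t : τ →₀ ℕ, ((Finsupp.single j 1 + t : τ →₀ ℕ) : τ → ℕ) j = t j + 1 := by
    intro t; rw [Finsupp.add_apply, Finsupp.single_eq_same, add_comm]
  ext m
  constructor
  · rintro ⟨hmT, hmin⟩
    rcases hmT with ⟨t₁, ht₁, rfl⟩ | hm₂
    · left
      refine ⟨t₁, ⟨ht₁, fun t' ht' hle' => ?_⟩, rfl⟩
      have := hmin (Finsupp.single j 1 + t') (Or.inl ⟨t', ht', rfl⟩)
        (add_le_add le_rfl hle')
      exact add_left_cancel this
    · right
      exact ⟨hm₂, fun t' ht' hle' => hmin t' (Or.inr ht') hle'⟩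
  · rintro (⟨t₁, ⟨ht₁, hmin₁⟩, rfl⟩ | ⟨hm₂, hmin₂⟩)
    · refine ⟨Or.inl ⟨t₁, ht₁, rfl⟩, ?_⟩
      rintro t (⟨t', ht', rfl⟩ | ht₂) hle'
      · have := add_le_add_iff_left (Finsupp.single j 1) |>.1 hle'
        rw [hmin₁ t' ht' this]
      · -- t ∈ T₂, t ≤ δ + t₁
        exfalso
        have htle : t ≤ t₁ := le_of_le_add_single (h₂ t ht₂) hle'
        obtain ⟨t₁', ht₁', ht₁'le⟩ := hle t ht₂
        have : t₁' = t₁ := hmin₁ t₁' ht₁' (le_trans ht₁'le htle)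
        subst this
        have : t = t₁' := le_antisymm htle ht₁'le
        subst this
        exact hdisj t ht₁' ht₂
    · refine ⟨Or.inr hm₂, ?_⟩
      rintro t (⟨t', ht', rfl⟩ | ht₂) hle'
      · exfalso
        have := hle' j
        rw [keyj] at this
        rw [h₂ m hm₂] at this
        omega
      · exact hmin₂ t ht₂ hle'

lemma span_singleton_X_mul (j : τ) (T : Set (τ →₀ ℕ)) :
    Ideal.span {(X j : MvPolynomial τ K)} *
      Ideal.span ((fun a => (monomial a 1 : MvPolynomial τ K)) '' T) =
    Ideal.span ((fun a => (monomial a 1 : MvPolynomial τ K)) ''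
      ((fun t => Finsupp.single j 1 + t) '' T)) := by
  rw [Ideal.span_mul_span', Set.singleton_mul, Set.image_image, Set.image_image]
  congr 1
  ext m
  constructor
  · rintro ⟨t, ht, rfl⟩
    exact ⟨t, ht, by simp [X, monomial_mul]⟩
  · rintro ⟨t, ht, rfl⟩
    exact ⟨t, ht, by simp [X, monomial_mul]⟩

lemma split_isVertexSplitting (j : τ) (T₁ T₂ : Set (τ →₀ ℕ))
    (h₁ : ∀ t ∈ T₁, t j = 0) (h₂ : ∀ t ∈ T₂, t j = 0)
    (hle : ∀ t₂ ∈ T₂, ∃ t₁ ∈ T₁, t₁ ≤ t₂)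
    (hdisj : ∀ t, t ∈ T₁ → t ∈ T₂ → False) :
    IsVertexSplitting
      (Ideal.span ((fun a => (monomial a 1 : MvPolynomial τ K)) ''
        ((fun t => Finsupp.single j 1 + t) '' T₁ ∪ T₂)))
      (Ideal.span ((fun a => (monomial a 1 : MvPolynomial τ K)) '' T₁))
      (Ideal.span ((fun a => (monomial a 1 : MvPolynomial τ K)) '' T₂)) j := by
  refine ⟨⟨T₁, h₁, rfl⟩, ⟨T₂, h₂, rfl⟩, ?_, ?_, ?_, ?_⟩
  · rw [Ideal.span_le]
    rintro _ ⟨t₂, ht₂, rfl⟩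
    exact mem_span_mono.2 (hle t₂ ht₂)
  · rw [Set.image_union, Ideal.span_union, span_singleton_X_mul, Submodule.add_eq_sup]
  · rw [mg_eq, mg_eq, mg_eq, minT_split j T₁ T₂ h₁ h₂ hle hdisj]
  · rw [mg_eq, mg_eq, Set.disjoint_left]
    rintro _ ⟨t₁, ht₁, rfl⟩ ⟨ht₂, -⟩
    have e1 : ((Finsupp.single j 1 + t₁ : τ →₀ ℕ) : τ → ℕ) j = t₁ j + 1 := by
      rw [Finsupp.add_apply, Finsupp.single_eq_same, add_comm]
    rw [h₂ _ ht₂] at e1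
    rw [h₁ t₁ ht₁.1] at e1
    omega

lemma vs_step (j : τ) (T₁ T₂ : Set (τ →₀ ℕ))
    (h₁ : ∀ t ∈ T₁, t j = 0) (h₂ : ∀ t ∈ T₂, t j = 0)
    (hle : ∀ t₂ ∈ T₂, ∃ t₁ ∈ T₁, t₁ ≤ t₂)
    (hdisj : ∀ t, t ∈ T₁ → t ∈ T₂ → False)
    (v₁ : VertexSplittable (Ideal.span ((fun a => (monomial a 1 : MvPolynomial τ K)) '' T₁)))
    (v₂ : VertexSplittable (Ideal.span ((fun a => (monomial a 1 : MvPolynomial τ K)) '' T₂))) :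
    VertexSplittable (Ideal.span ((fun a => (monomial a 1 : MvPolynomial τ K)) ''
      ((fun t => Finsupp.single j 1 + t) '' T₁ ∪ T₂))) :=
  VertexSplittable.split _ _ _ j v₁ v₂ (split_isVertexSplitting j T₁ T₂ h₁ h₂ hle hdisj)

lemma span_empty_bot :
    Ideal.span ((fun a => (monomial a 1 : MvPolynomial τ K)) '' (∅ : Set (τ →₀ ℕ))) = ⊥ := by
  rw [Set.image_empty, Ideal.span_empty]

lemma vs_principal (N : ℕ) : ∀ (a : τ →₀ ℕ), a.support.card ≤ N → (∀ x, a x ≤ 1) →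
    VertexSplittable (Ideal.span ((fun t => (monomial t 1 : MvPolynomial τ K)) '' {a})) := by
  induction N with
  | zero =>
    intro a hcard _
    have ha : a = 0 := by
      have := Finset.card_eq_zero.1 (Nat.le_zero.1 hcard)
      exact Finsupp.support_eq_empty.1 this
    subst ha
    have : Ideal.span ((fun t => (monomial t 1 : MvPolynomial τ K)) '' {0}) = ⊤ := by
      rw [Set.image_singleton, monomial_zero', C_1, Ideal.span_singleton_one]
    rw [this]
    exact VertexSplittable.top
  | succ N ih =>
    intro a hcard hsf
    by_cases h0 : a = 0
    · subst h0
      have : Ideal.span ((fun t => (monomial t 1 : MvPolynomial τ K)) '' {0}) = ⊤ := by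
        rw [Set.image_singleton, monomial_zero', C_1, Ideal.span_singleton_one]
      rw [this]
      exact VertexSplittable.top
    · obtain ⟨i, hi⟩ : ∃ i, a i ≠ 0 := by
        by_contra h
        push_neg at h
        exact h0 (Finsupp.ext fun i => h i)
      have hisupp : i ∈ a.support := Finsupp.mem_support_iff.2 hi
      have hai : a i = 1 := le_antisymm (hsf i) (Nat.one_le_iff_ne_zero.2 hi)
      set a' := a.erase i with ha'
      have hset : ({a} : Set (τ →₀ ℕ)) =
          (fun t => Finsupp.single i 1 + t) '' {a'} ∪ (∅ : Set (τ →₀ ℕ)) := by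
        rw [Set.image_singleton, Set.union_empty]
        congr 1
        rw [ha']
        conv_lhs => rw [← Finsupp.single_add_erase i a]
        rw [hai]
      rw [hset]
      refine vs_step i {a'} ∅ ?_ ?_ ?_ ?_ ?_ ?_
      · rintro t rfl
        exact Finsupp.erase_same
      · rintro t ht; cases ht
      · rintro t ht; cases ht
      · rintro t _ ht; cases ht
      · refine ih a' ?_ ?_
        · rw [ha', Finsupp.support_erase]
          have := Finset.card_erase_of_mem hisupp
          omega
        · intro x
          rw [ha']
          by_cases hx : x = i
          · subst hx; simp [Finsupp.erase_same]
          · rw [Finsupp.erase_ne hx]; exact hsf x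
      · rw [span_empty_bot]
        exact VertexSplittable.bot

section Main

variable {n s : ℕ}

/-- the set of colours not fully contained in `A`. -/
def NU (U : Fin s → Finset (Fin n)) (A : Finset (Fin n)) : Finset (Fin s) :=
  Finset.univ.filter (fun k => ¬ U k ⊆ A)

/-- exponent vector of the generator of the coloured ideal attached to `A`. -/
noncomputable def EU (U : Fin s → Finset (Fin n)) (A : Finset (Fin n)) :
    (Fin n ⊕ Fin s) →₀ ℕ :=
  dOf (A.map ⟨Sum.inl, Sum.inl_injective⟩ ∪ (NU U A).map ⟨Sum.inr, Sum.inr_injective⟩)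

lemma EU_apply_inl (U : Fin s → Finset (Fin n)) (A : Finset (Fin n)) (i : Fin n) :
    EU U A (Sum.inl i) = if i ∈ A then 1 else 0 := by
  rw [EU, dOf_apply]
  congr 1
  simp

lemma EU_apply_inr (U : Fin s → Finset (Fin n)) (A : Finset (Fin n)) (k : Fin s) :
    EU U A (Sum.inr k) = if ¬ U k ⊆ A then 1 else 0 := by
  rw [EU, dOf_apply]
  congr 1
  simp [NU]

lemma EU_le_one (U : Fin s → Finset (Fin n)) (A : Finset (Fin n)) (x : Fin n ⊕ Fin s) :
    EU U A x ≤ 1 := dOf_le_one _ _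

lemma erase_subset_iff_subset_insert {j : Fin n} {F B : Finset (Fin n)} :
    F.erase j ⊆ B ↔ F ⊆ insert j B := by
  constructor
  · intro h x hx
    by_cases hxj : x = j
    · subst hxj; exact Finset.mem_insert_self _ _
    · exact Finset.mem_insert_of_mem (h (Finset.mem_erase.2 ⟨hxj, hx⟩))
  · intro h x hx
    rcases Finset.mem_erase.1 hx with ⟨hxj, hxF⟩
    rcases Finset.mem_insert.1 (h hxF) with rfl | hB
    · exact absurd rfl hxj
    · exact hB

lemma EU_insert (U : Fin s → Finset (Fin n)) {j : Fin n} {B : Finset (Fin n)} (hj : j ∉ B) :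
    EU U (insert j B) = Finsupp.single (Sum.inl j) 1 + EU (fun k => (U k).erase j) B := by
  ext x
  rw [Finsupp.add_apply]
  cases x with
  | inl i =>
    rw [EU_apply_inl, EU_apply_inl, Finsupp.single_apply]
    by_cases hij : i = j
    · subst hij
      simp [hj]
    · have hji : ¬ j = i := fun h => hij h.symm
      simp [Finset.mem_insert, hij, hji]
  | inr k =>
    rw [EU_apply_inr, EU_apply_inr, Finsupp.single_apply]
    simp [erase_subset_iff_subset_insert]

lemma EU_erase_le (U : Fin s → Finset (Fin n)) (A : Finset (Fin n)) (j : Fin n) :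
    EU (fun k => (U k).erase j) A ≤ EU U A := by
  intro x
  cases x with
  | inl i => rw [EU_apply_inl, EU_apply_inl]
  | inr k =>
    rw [EU_apply_inr, EU_apply_inr]
    by_cases h : (U k).erase j ⊆ A
    · simp [h]
    · have h2 : ¬ U k ⊆ A := fun hs => h (Finset.Subset.trans (Finset.erase_subset _ _) hs)
      simp [h, h2]

lemma EU_inj_finset {U U' : Fin s → Finset (Fin n)} {A B : Finset (Fin n)}
    (h : EU U A = EU U' B) : A = B := by
  ext i
  have := DFunLike.congr_fun h (Sum.inl i)
  rw [EU_apply_inl, EU_apply_inl] at this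
  by_cases hA : i ∈ A <;> by_cases hB : i ∈ B <;> simp [hA, hB] at this ⊢

end Main

section MainLemma

variable {n s : ℕ} {K : Type*} [Field K]

lemma main_base (U : Fin s → Finset (Fin n)) (S : Set (Finset (Fin n)))
    (hSW : ∀ A ∈ S, A ⊆ (∅ : Finset (Fin n))) :
    VertexSplittable (Ideal.span
      ((fun t => (monomial t 1 : MvPolynomial (Fin n ⊕ Fin s) K)) '' (EU U '' S))) := by
  rcases S.eq_empty_or_nonempty with rfl | ⟨A₀, hA₀⟩
  · rw [Set.image_empty, span_empty_bot]
    exact VertexSplittable.bot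
  · have hA₀e : A₀ = ∅ := Finset.subset_empty.1 (hSW A₀ hA₀)
    subst hA₀e
    have himg : EU U '' S = {EU U ∅} := by
      apply Set.Subset.antisymm
      · rintro _ ⟨A, hA, rfl⟩
        have : A = ∅ := Finset.subset_empty.1 (hSW A hA)
        subst this
        rfl
      · rintro _ rfl
        exact ⟨∅, hA₀, rfl⟩
    rw [himg]
    exact vs_principal ((EU U ∅).support.card) (EU U ∅) le_rfl (EU_le_one U ∅)

lemma main_lemma (N : ℕ) : ∀ (W : Finset (Fin n)), W.card ≤ N →
    ∀ (U : Fin s → Finset (Fin n)) (S : Set (Finset (Fin n))),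
    (∀ A ∈ S, A ⊆ W) →
    (∀ A ∈ S, ∀ B : Finset (Fin n), A ⊆ B → B ⊆ W → B ∈ S) →
    (∀ j ∈ W, ∃ k, j ∈ U k) →
    (∀ A ∈ S, ∀ k, (U k \ A).card ≤ 1) →
    VertexSplittable (Ideal.span
      ((fun t => (monomial t 1 : MvPolynomial (Fin n ⊕ Fin s) K)) '' (EU U '' S))) := by
  induction N with
  | zero =>
    intro W hW U S hSW _ _ _
    have : W = ∅ := Finset.card_eq_zero.1 (Nat.le_zero.1 hW)
    subst this
    exact main_base U S hSW
  | succ N ih =>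
    intro W hW U S hSW hup hcov hcol
    rcases W.eq_empty_or_nonempty with rfl | ⟨j, hjW⟩
    · exact main_base U S hSW
    · set U' : Fin s → Finset (Fin n) := fun k => (U k).erase j with hU'
      set S' : Set (Finset (Fin n)) := {B | j ∉ B ∧ insert j B ∈ S} with hS'
      set S₂ : Set (Finset (Fin n)) := {A | A ∈ S ∧ j ∉ A} with hS₂
      have hsplit : EU U '' S =
          (fun t => Finsupp.single (Sum.inl j) 1 + t) '' (EU U' '' S') ∪ EU U '' S₂ := by
        apply Set.Subset.antisymm
        · rintro _ ⟨A, hA, rfl⟩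
          by_cases hjA : j ∈ A
          · left
            refine ⟨EU U' (A.erase j), ⟨A.erase j,
              ⟨Finset.notMem_erase j A, by rwa [Finset.insert_erase hjA]⟩, rfl⟩, ?_⟩
            show Finsupp.single (Sum.inl j) 1 + EU U' (A.erase j) = EU U A
            rw [hU', ← EU_insert U (Finset.notMem_erase j A), Finset.insert_erase hjA]
          · right
            exact ⟨A, ⟨hA, hjA⟩, rfl⟩
        · rintro _ (⟨_, ⟨B, ⟨hjB, hBS⟩, rfl⟩, rfl⟩ | ⟨A, ⟨hA, _⟩, rfl⟩)
          · refine ⟨insert j B, hBS, ?_⟩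
            show EU U (insert j B) = Finsupp.single (Sum.inl j) 1 + EU U' B
            rw [hU']
            exact EU_insert U hjB
          · exact ⟨A, hA, rfl⟩
      rw [hsplit]
      have hcard : (W.erase j).card ≤ N := by
        have := Finset.card_erase_of_mem hjW
        have := Finset.card_pos.2 ⟨j, hjW⟩
        omega
      refine vs_step (Sum.inl j) (EU U' '' S') (EU U '' S₂) ?_ ?_ ?_ ?_ ?_ ?_
      · rintro _ ⟨B, ⟨hjB, _⟩, rfl⟩
        rw [EU_apply_inl, if_neg hjB]
      · rintro _ ⟨A, ⟨_, hjA⟩, rfl⟩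
        rw [EU_apply_inl, if_neg hjA]
      · rintro _ ⟨A, ⟨hA, hjA⟩, rfl⟩
        refine ⟨EU U' A, ⟨A, ⟨hjA, ?_⟩, rfl⟩, EU_erase_le U A j⟩
        exact hup A hA (insert j A) (Finset.subset_insert j A)
          (Finset.insert_subset hjW (hSW A hA))
      · rintro _ ⟨B, ⟨hjB, hBS⟩, rfl⟩ ⟨A, ⟨hA, hjA⟩, hEq⟩
        have hBA : A = B := EU_inj_finset hEq
        subst hBA
        obtain ⟨k, hjk⟩ := hcov j hjW
        have hkA : ¬ U k ⊆ A := fun hs => hjA (hs hjk)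
        have h1 : EU U A (Sum.inr k) = 1 := by rw [EU_apply_inr, if_pos hkA]
        have h2 : ¬ (U k).erase j ⊆ A := by
          intro hsub
          have := DFunLike.congr_fun hEq (Sum.inr k)
          rw [EU_apply_inr, EU_apply_inr, if_pos hkA, if_neg (not_not.2 hsub)] at this
          omega
        apply h2
        intro x hx
        rcases Finset.mem_erase.1 hx with ⟨hxj, hxU⟩
        by_contra hxA
        have hmem : x ∈ U k \ A := Finset.mem_sdiff.2 ⟨hxU, hxA⟩
        have hmemj : j ∈ U k \ A := Finset.mem_sdiff.2 ⟨hjk, hjA⟩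
        exact hxj (Finset.card_le_one.1 (hcol A hA k) x hmem j hmemj)
      · refine ih (W.erase j) hcard U' S' ?_ ?_ ?_ ?_
        · rintro B ⟨hjB, hBS⟩
          rw [Finset.subset_erase]
          exact ⟨(Finset.subset_insert j B).trans (hSW _ hBS), hjB⟩
        · rintro B ⟨hjB, hBS⟩ B' hBB' hB'W
          rcases Finset.subset_erase.1 hB'W with ⟨hB'W, hjB'⟩
          refine ⟨hjB', hup _ hBS (insert j B') (Finset.insert_subset_insert _ hBB')
            (Finset.insert_subset hjW hB'W)⟩
        · intro i hi
          rcases Finset.mem_erase.1 hi with ⟨hij, hiW⟩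
          obtain ⟨k, hk⟩ := hcov i hiW
          exact ⟨k, Finset.mem_erase.2 ⟨hij, hk⟩⟩
        · rintro B ⟨hjB, hBS⟩ k
          refine le_trans (Finset.card_le_card ?_) (hcol _ hBS k)
          intro x hx
          rcases Finset.mem_sdiff.1 hx with ⟨hxU, hxB⟩
          rcases Finset.mem_erase.1 hxU with ⟨hxj, hxUk⟩
          exact Finset.mem_sdiff.2 ⟨hxUk, fun hins =>
            (Finset.mem_insert.1 hins).elim hxj hxB⟩
      · refine ih (W.erase j) hcard U S₂ ?_ ?_ ?_ ?_
        · rintro A ⟨hA, hjA⟩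
          rw [Finset.subset_erase]
          exact ⟨hSW A hA, hjA⟩
        · rintro A ⟨hA, _⟩ B hAB hBW
          rcases Finset.subset_erase.1 hBW with ⟨hBW, hjB⟩
          exact ⟨hup A hA B hAB hBW, hjB⟩
        · intro i hi
          exact hcov i (Finset.mem_of_mem_erase hi)
        · rintro A ⟨hA, _⟩ k
          exact hcol A hA k

end MainLemma

section GenEq

variable {n s : ℕ} {K : Type*} [Field K]

lemma gen_eq (U : Fin s → Finset (Fin n)) (A : Finset (Fin n)) :
    (∏ i ∈ A, (X (Sum.inl i) : MvPolynomial (Fin n ⊕ Fin s) K)) *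
      ∏ k ∈ Finset.univ.filter (fun k : Fin s => ¬ U k ⊆ A),
        (X (Sum.inr k) : MvPolynomial (Fin n ⊕ Fin s) K) =
      monomial (EU U A) 1 := by
  have hdisj : Disjoint (A.map ⟨Sum.inl, Sum.inl_injective⟩)
      ((NU U A).map ⟨Sum.inr, Sum.inr_injective⟩) := by
    rw [Finset.disjoint_left]
    rintro x hx hx'
    simp only [Finset.mem_map, Function.Embedding.coeFn_mk] at hx hx'
    obtain ⟨a, -, rfl⟩ := hx
    obtain ⟨b, -, hb⟩ := hx'
    cases hb
  have h1 : ∏ i ∈ A, (X (Sum.inl i) : MvPolynomial (Fin n ⊕ Fin s) K)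
      = ∏ x ∈ A.map ⟨Sum.inl, Sum.inl_injective⟩, X x := by
    rw [Finset.prod_map]
    rfl
  have h2 : ∏ k ∈ Finset.univ.filter (fun k : Fin s => ¬ U k ⊆ A),
        (X (Sum.inr k) : MvPolynomial (Fin n ⊕ Fin s) K)
      = ∏ x ∈ (NU U A).map ⟨Sum.inr, Sum.inr_injective⟩, X x := by
    rw [Finset.prod_map]
    rfl
  rw [h1, h2, ← Finset.prod_union hdisj, prod_X_eq, EU]

end GenEq

end Stmt13Aux

open Stmt13Aux

/-- for a squarefree monomial ideal `I` and a colouring `χ` of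
`I`, the ideal `I_χ` is vertex splittable. -/
theorem stmt13 {n s : ℕ} {K : Type*} [Field K]
    (I : Ideal (MvPolynomial (Fin n) K)) (hI : IsMonomialIdeal I)
    (hsf : ∀ a ∈ minimalGens I, ∀ k : Fin n, a k ≤ 1)
    (V : Fin s → Finset (Fin n))
    (hpart : ∀ x : Fin n, ∃! k : Fin s, x ∈ V k)
    (hcol : ∀ k : Fin s, ∀ A : Finset (Fin n),
      (∏ i ∈ A, (X i : MvPolynomial (Fin n) K)) ∈ I → (V k \ A).card ≤ 1) :
    VertexSplittable (Ideal.span {m : MvPolynomial (Fin n ⊕ Fin s) K |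
      ∃ A : Finset (Fin n), (∏ i ∈ A, (X i : MvPolynomial (Fin n) K)) ∈ I ∧
        m = (∏ i ∈ A, (X (Sum.inl i) : MvPolynomial (Fin n ⊕ Fin s) K)) *
          ∏ k ∈ Finset.univ.filter (fun k : Fin s => ¬ V k ⊆ A),
            (X (Sum.inr k) : MvPolynomial (Fin n ⊕ Fin s) K)}) := by
  have hset : {m : MvPolynomial (Fin n ⊕ Fin s) K |
      ∃ A : Finset (Fin n), (∏ i ∈ A, (X i : MvPolynomial (Fin n) K)) ∈ I ∧
        m = (∏ i ∈ A, (X (Sum.inl i) : MvPolynomial (Fin n ⊕ Fin s) K)) *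
          ∏ k ∈ Finset.univ.filter (fun k : Fin s => ¬ V k ⊆ A),
            (X (Sum.inr k) : MvPolynomial (Fin n ⊕ Fin s) K)} =
      (fun t => (monomial t 1 : MvPolynomial (Fin n ⊕ Fin s) K)) ''
        (EU V '' {A : Finset (Fin n) | (∏ i ∈ A, (X i : MvPolynomial (Fin n) K)) ∈ I}) := by
    ext m
    simp only [Set.mem_setOf_eq, Set.mem_image]
    constructor
    · rintro ⟨A, hA, rfl⟩
      exact ⟨EU V A, ⟨A, hA, rfl⟩, (gen_eq V A).symm⟩
    · rintro ⟨t, ⟨A, hA, rfl⟩, rfl⟩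
      exact ⟨A, hA, (gen_eq V A).symm⟩
  rw [hset]
  refine main_lemma (Finset.univ : Finset (Fin n)).card Finset.univ le_rfl V _
    (fun A _ => Finset.subset_univ A) ?_ ?_ ?_
  · rintro A hA B hAB _
    show (∏ i ∈ B, (X i : MvPolynomial (Fin n) K)) ∈ I
    rw [← Finset.prod_sdiff hAB]
    exact Ideal.mul_mem_left I _ hA
  · intro j _
    obtain ⟨k, hk, -⟩ := hpart j
    exact ⟨k, hk⟩
  · intro A hA k
    exact hcol k A hA
end

section
/- Every polymatroidal ideal is weakly polymatroidal. -/
open MvPolynomial Finset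

/-- polymatroidal monomial ideals: generated in a single degree, satisfying the
exchange property. -/
def Polymatroidal {n : ℕ} {K : Type*} [Field K]
    (I : Ideal (MvPolynomial (Fin n) K)) : Prop :=
  (∃ dd : ℕ, ∀ a ∈ minimalGens I, (∑ k : Fin n, a k) = dd) ∧
  ∀ a ∈ minimalGens I, ∀ b ∈ minimalGens I, ∀ i : Fin n, b i < a i →
    ∃ j : Fin n, a j < b j ∧
      a + Finsupp.single j 1 - Finsupp.single i 1 ∈ minimalGens I


private lemma sum_drop2 {n : ℕ} (f g : Fin n → ℕ) (i l : Fin n) (hil : i ≠ l)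
    (hk : ∀ k, k ≠ i → k ≠ l → g k = f k) (hi : g i + 1 ≤ f i) (hl : g l + 1 ≤ f l) :
    (∑ k : Fin n, g k) + 2 ≤ ∑ k : Fin n, f k := by
  classical
  have hli : l ∈ Finset.univ.erase i := by
    simp [Ne.symm hil]
  rw [← Finset.sum_erase_add _ f (Finset.mem_univ i), ← Finset.sum_erase_add _ f hli,
    ← Finset.sum_erase_add _ g (Finset.mem_univ i), ← Finset.sum_erase_add _ g hli]
  have hsum : ∑ k ∈ (Finset.univ.erase i).erase l, g k
      = ∑ k ∈ (Finset.univ.erase i).erase l, f k := by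
    refine Finset.sum_congr rfl ?_
    intro k hkmem
    simp only [Finset.mem_erase] at hkmem
    exact hk k hkmem.2.1 hkmem.1
  omega

private lemma key_lemma {n : ℕ} {K : Type*} [Field K]
    (I : Ideal (MvPolynomial (Fin n) K))
    (hd : ∃ dd : ℕ, ∀ a ∈ minimalGens I, (∑ k : Fin n, a k) = dd)
    (hex : ∀ a ∈ minimalGens I, ∀ b ∈ minimalGens I, ∀ i : Fin n, b i < a i →
      ∃ j : Fin n, a j < b j ∧
        a + Finsupp.single j 1 - Finsupp.single i 1 ∈ minimalGens I) :
    ∀ (D : ℕ) (a b : Fin n →₀ ℕ), a ∈ minimalGens I → b ∈ minimalGens I →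
      (∑ k : Fin n, ((a k - b k) + (b k - a k))) ≤ D →
      ∀ i : Fin n, a i < b i →
      ∃ j : Fin n, b j < a j ∧
        a + Finsupp.single i 1 - Finsupp.single j 1 ∈ minimalGens I := by
  classical
  intro D
  induction D with
  | zero =>
    intro a b ha hb hD i hi
    exfalso
    have h0 : ∀ k ∈ (Finset.univ : Finset (Fin n)), ((a k - b k) + (b k - a k)) = 0 :=
      Finset.sum_eq_zero_iff.mp (Nat.le_zero.mp hD)
    have := h0 i (Finset.mem_univ i)
    omega
  | succ D ih =>
    intro a b ha hb hD i hi
    by_cases hA : ∃ k, k ≠ i ∧ a k < b k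
    · -- b has surplus at some k ≠ i
      obtain ⟨k, hki, hk⟩ := hA
      obtain ⟨l, hl, hcmem⟩ := hex b hb a ha k hk
      set c := b + Finsupp.single l 1 - Finsupp.single k 1 with hcdef
      have hcc : ∀ m, c m = b m + (if l = m then 1 else 0) - (if k = m then 1 else 0) := by
        intro m
        simp [hcdef, Finsupp.tsub_apply, Finsupp.add_apply, Finsupp.single_apply]
      have hlk : l ≠ k := by intro h; rw [h] at hl; omega
      have hli : l ≠ i := by intro h; rw [h] at hl; omega
      have hci : a i < c i := by
        have := hcc i
        simp [hli, hki] at this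
        omega
      have hdist : (∑ m : Fin n, ((a m - c m) + (c m - a m))) + 2
          ≤ ∑ m : Fin n, ((a m - b m) + (b m - a m)) := by
        refine sum_drop2 _ _ k l (Ne.symm hlk) ?_ ?_ ?_
        · intro m hmk hml
          have := hcc m
          simp [Ne.symm hml, Ne.symm hmk] at this
          rw [this]
        · have := hcc k
          simp [hlk] at this
          omega
        · have := hcc l
          simp [Ne.symm hlk] at this
          omega
      obtain ⟨j, hj, hjm⟩ := ih a c ha hcmem (by omega) i hci
      refine ⟨j, ?_, hjm⟩
      by_cases hjl : j = l
      · subst hjl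
        have := hcc j
        simp [Ne.symm hlk] at this
        omega
      · by_cases hjk : j = k
        · subst hjk
          have := hcc j
          simp [hlk] at this
          omega
        · have := hcc j
          simp [Ne.symm hjl, Ne.symm hjk] at this
          omega
    · -- all surplus of b is at i
      push_neg at hA
      obtain ⟨l, hl, hcmem⟩ := hex b hb a ha i hi
      set c := b + Finsupp.single l 1 - Finsupp.single i 1 with hcdef
      have hcc : ∀ m, c m = b m + (if l = m then 1 else 0) - (if i = m then 1 else 0) := by
        intro m
        simp [hcdef, Finsupp.tsub_apply, Finsupp.add_apply, Finsupp.single_apply]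
      have hli : l ≠ i := by intro h; rw [h] at hl; omega
      by_cases hsub : a i < c i
      · have hdist : (∑ m : Fin n, ((a m - c m) + (c m - a m))) + 2
            ≤ ∑ m : Fin n, ((a m - b m) + (b m - a m)) := by
          refine sum_drop2 _ _ i l hli.symm ?_ ?_ ?_
          · intro m hmi hml
            have := hcc m
            simp [Ne.symm hml, Ne.symm hmi] at this
            rw [this]
          · have := hcc i
            simp [hli] at this
            omega
          · have := hcc l
            simp [Ne.symm hli] at this
            omega
        obtain ⟨j, hj, hjm⟩ := ih a c ha hcmem (by omega) i hsub
        refine ⟨j, ?_, hjm⟩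
        by_cases hjl : j = l
        · subst hjl
          have := hcc j
          simp [Ne.symm hli] at this
          omega
        · by_cases hji : j = i
          · subst hji; omega
          · have := hcc j
            simp [Ne.symm hjl, Ne.symm hji] at this
            omega
      · -- c ≤ a pointwise, equal sums ⇒ c = a, so b = a + e_i - e_l
        have hcle : ∀ m, c m ≤ a m := by
          intro m
          by_cases hmi : m = i
          · subst hmi; omega
          · by_cases hml : m = l
            · subst hml
              have := hcc m
              simp [Ne.symm hli] at this
              omega
            · have := hcc m
              rw [if_neg (show ¬ l = m from fun h => hml h.symm),
                if_neg (show ¬ i = m from fun h => hmi h.symm)] at this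
              have h2 := hA m hmi
              omega
        obtain ⟨dd, hdd⟩ := hd
        have hsa := hdd a ha
        have hsc := hdd c hcmem
        have hceq : ∀ m, c m = a m := by
          intro m
          by_contra hne
          have hlt : c m < a m := lt_of_le_of_ne (hcle m) hne
          have : (∑ k : Fin n, c k) < ∑ k : Fin n, a k := by
            refine Finset.sum_lt_sum (fun k _ => hcle k) ⟨m, Finset.mem_univ m, hlt⟩
          omega
        refine ⟨l, hl, ?_⟩
        have hbeq : a + Finsupp.single i 1 - Finsupp.single l 1 = b := by
          ext m
          rw [Finsupp.tsub_apply, Finsupp.add_apply, Finsupp.single_apply,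
            Finsupp.single_apply]
          have h1 := hceq m
          rw [hcc m] at h1
          by_cases hmi : m = i
          · subst hmi
            simp [fun h : l = m => hli h, hli] at h1 ⊢
            omega
          · by_cases hml : m = l
            · subst hml
              simp [fun h : i = m => hmi h.symm, Ne.symm hli] at h1 ⊢
              omega
            · rw [if_neg (show ¬ l = m from fun h => hml h.symm),
                if_neg (show ¬ i = m from fun h => hmi h.symm)] at h1 ⊢
              omega
        rw [hbeq]
        exact hb

/-- every polymatroidal ideal is weakly polymatroidal. -/
theorem stmt16 {n : ℕ} {K : Type*} [Field K]
    (I : Ideal (MvPolynomial (Fin n) K)) (hI : IsMonomialIdeal I)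
    (hp : Polymatroidal I) : WeaklyPolymatroidal I := by
  intro a ha b hb i hlt hi
  obtain ⟨j, hj, hmem⟩ := key_lemma I hp.1 hp.2
    (∑ k : Fin n, ((a k - b k) + (b k - a k))) a b ha hb le_rfl i hi
  refine ⟨j, ?_, by omega, hmem⟩
  rcases lt_trichotomy i j with h | h | h
  · exact h
  · subst h; omega
  · have := hlt j h; omega
end

section
/- Let $G$ be a graph obtained from an arbitrary graph $H$ by attaching a complete graph $K_{m_i}$ (with $m_i \ge 2$) to each vertex $i$ of $H$ (identifying one vertex of $K_{m_i}$ with $i$). Then the independence complex of $G$ is vertex decomposable. -/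
open MvPolynomial Finset

/-- the graph obtained from `H` by attaching a complete graph `K_{mᵢ}` to each
vertex `i` of `H` (identifying the vertex `⟨i, 0⟩` with `i`). -/
def attachCliques {n : ℕ} (H : SimpleGraph (Fin n)) (m : Fin n → ℕ) :
    SimpleGraph (Σ i : Fin n, Fin (m i)) where
  Adj u v := (u.1 = v.1 ∧ u ≠ v) ∨ ((u.2 : ℕ) = 0 ∧ (v.2 : ℕ) = 0 ∧ H.Adj u.1 v.1)
  symm := by
    constructor
    rintro u v (⟨h1, h2⟩ | ⟨h1, h2, h3⟩)
    · exact Or.inl ⟨h1.symm, h2.symm⟩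
    · exact Or.inr ⟨h2, h1, h3.symm⟩
  loopless := by
    constructor
    rintro u (⟨-, h⟩ | ⟨-, -, h⟩)
    · exact h rfl
    · exact H.loopless.irrefl _ h

namespace Stmt18Aux

variable {n : ℕ} (H : SimpleGraph (Fin n)) (m : Fin n → ℕ)

/-- the complex of independent sets of `attachCliques H m` contained in `W`. -/
def cx (W : Finset (Σ i : Fin n, Fin (m i))) : Set (Finset (Σ i : Fin n, Fin (m i))) :=
  {F | F ⊆ W ∧ ∀ u ∈ F, ∀ v ∈ F, ¬ (attachCliques H m).Adj u v}

lemma adj_iff (u v : Σ i : Fin n, Fin (m i)) :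
    (attachCliques H m).Adj u v ↔
      (u.1 = v.1 ∧ u ≠ v) ∨ ((u.2 : ℕ) = 0 ∧ (v.2 : ℕ) = 0 ∧ H.Adj u.1 v.1) := Iff.rfl

lemma insert_indep (x : Σ i : Fin n, Fin (m i)) (F : Finset (Σ i : Fin n, Fin (m i)))
    (hind : ∀ u ∈ F, ∀ v ∈ F, ¬ (attachCliques H m).Adj u v)
    (key : ∀ w ∈ F, ¬ (attachCliques H m).Adj x w) :
    ∀ u ∈ insert x F, ∀ v ∈ insert x F, ¬ (attachCliques H m).Adj u v := by
  intro u hu v hv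
  rcases Finset.mem_insert.mp hu with h1 | h1 <;> rcases Finset.mem_insert.mp hv with h2 | h2
  · rw [h1, h2]; exact (attachCliques H m).loopless.irrefl x
  · rw [h1]; exact key v h2
  · rw [h2]; exact fun h => key u h1 ((attachCliques H m).adj_symm h)
  · exact hind u h1 v h2

lemma del_eq (W : Finset (Σ i : Fin n, Fin (m i))) (x : Σ i : Fin n, Fin (m i)) :
    complexDel (cx H m W) x = cx H m (W.erase x) := by
  ext F
  constructor
  · rintro ⟨⟨hFW, hind⟩, hx⟩
    exact ⟨fun v hv => Finset.mem_erase.mpr ⟨fun h => hx (h ▸ hv), hFW hv⟩, hind⟩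
  · rintro ⟨hFW, hind⟩
    exact ⟨⟨fun v hv => Finset.mem_of_mem_erase (hFW hv), hind⟩,
      fun hx => (Finset.mem_erase.mp (hFW hx)).1 rfl⟩

lemma link_eq (W W' : Finset (Σ i : Fin n, Fin (m i))) (x : Σ i : Fin n, Fin (m i))
    (hxW : x ∈ W) (hx : (x.2 : ℕ) = 0 ∨ ∀ v ∈ W, (v.2 : ℕ) ≠ 0)
    (hW' : ∀ v, v ∈ W' ↔ v ∈ W ∧ v.1 ≠ x.1 ∧ ((v.2 : ℕ) = 0 → ¬ H.Adj x.1 v.1)) :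
    complexLink (cx H m W) x = cx H m W' := by
  ext F
  constructor
  · rintro ⟨⟨hFW, hind⟩, hxF, ⟨-, hind'⟩⟩
    refine ⟨fun v hv => (hW' v).mpr ⟨hFW hv, ?_, ?_⟩, hind⟩
    · intro h
      exact hind' x (Finset.mem_insert_self _ _) v (Finset.mem_insert_of_mem hv)
        (Or.inl ⟨h.symm, fun e => hxF (e ▸ hv)⟩)
    · intro h0 hadj
      rcases hx with h | h
      · exact hind' x (Finset.mem_insert_self _ _) v (Finset.mem_insert_of_mem hv)
          (Or.inr ⟨h, h0, hadj⟩)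
      · exact h v (hFW hv) h0
  · rintro ⟨hFW', hind⟩
    have hFW : F ⊆ W := fun v hv => ((hW' v).mp (hFW' hv)).1
    have hxF : x ∉ F := fun h => ((hW' x).mp (hFW' h)).2.1 rfl
    have key : ∀ w ∈ F, ¬ (attachCliques H m).Adj x w := by
      intro w hw hadj
      obtain ⟨-, h1, h2⟩ := (hW' w).mp (hFW' hw)
      rcases hadj with ⟨e, -⟩ | ⟨e0, w0, hH⟩
      · exact h1 e.symm
      · exact h2 w0 hH
    refine ⟨⟨hFW, hind⟩, hxF, ⟨?_, insert_indep H m x F hind key⟩⟩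
    intro v hv
    rcases Finset.mem_insert.mp hv with h1 | h1
    · rw [h1]; exact hxW
    · exact hFW h1

lemma shed (W : Finset (Σ i : Fin n, Fin (m i))) (x y : Σ i : Fin n, Fin (m i))
    (hyW : y ∈ W) (hyx : y.1 = x.1) (hy2 : (y.2 : ℕ) ≠ 0) (hne : y ≠ x) :
    ∀ F, IsFacet (complexDel (cx H m W) x) F → IsFacet (cx H m W) F := by
  intro F hF
  rw [del_eq] at hF
  obtain ⟨⟨hFe, hind⟩, hmax⟩ := hF
  have hxF : x ∉ F := fun h => (Finset.mem_erase.mp (hFe h)).1 rfl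
  refine ⟨⟨fun v hv => Finset.mem_of_mem_erase (hFe hv), hind⟩, ?_⟩
  intro G hG hFG
  by_cases hxG : x ∈ G
  · exfalso
    obtain ⟨hGW, hGind⟩ := hG
    have h1 : ∀ v ∈ F, v.1 ≠ x.1 := by
      intro v hv hv1
      exact hGind x hxG v (hFG hv) (Or.inl ⟨hv1.symm, fun e => hxF (e ▸ hv)⟩)
    have hyF : y ∉ F := fun h => h1 y h hyx
    have key : ∀ w ∈ F, ¬ (attachCliques H m).Adj y w := by
      intro w hw hadj
      rcases hadj with ⟨e, -⟩ | ⟨e0, -⟩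
      · exact h1 w hw (e ▸ hyx)
      · exact hy2 e0
    have hmem : insert y F ∈ cx H m (W.erase x) := by
      refine ⟨?_, insert_indep H m y F hind key⟩
      intro v hv
      rcases Finset.mem_insert.mp hv with h1 | h1
      · rw [h1]; exact Finset.mem_erase.mpr ⟨hne, hyW⟩
      · exact hFe h1
    have := hmax _ hmem (Finset.subset_insert _ _)
    exact hyF (this ▸ Finset.mem_insert_self y F)
  · exact hmax G ⟨fun v hv => Finset.mem_erase.mpr ⟨fun e => hxG (e ▸ hv), hG.1 hv⟩, hG.2⟩ hFG

lemma main (W : Finset (Σ i : Fin n, Fin (m i))) :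
    (∀ v ∈ W, (v.2 : ℕ) = 0 → ∃ w ∈ W, w.1 = v.1 ∧ (w.2 : ℕ) ≠ 0) →
    VertexDecomposable (cx H m W) := by
  classical
  induction W using Finset.strongInduction with
  | _ W ih =>
    intro hP
    by_cases hA : ∃ v ∈ W, (v.2 : ℕ) = 0
    · obtain ⟨x, hxW, hx0⟩ := hA
      obtain ⟨y, hyW, hyx, hy2⟩ := hP x hxW hx0
      have hne : y ≠ x := fun e => hy2 (by rw [e]; exact hx0)
      set W' : Finset (Σ i : Fin n, Fin (m i)) :=
        W.filter (fun v => v.1 ≠ x.1 ∧ ((v.2 : ℕ) = 0 → ¬ H.Adj x.1 v.1)) with hW'def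
      have hW' : ∀ v, v ∈ W' ↔ v ∈ W ∧ v.1 ≠ x.1 ∧ ((v.2 : ℕ) = 0 → ¬ H.Adj x.1 v.1) := by
        intro v; simp [hW'def]
      refine VertexDecomposable.step _ x ⟨Finset.singleton_subset_iff.mpr hxW, ?_⟩ ?_ ?_
        (shed H m W x y hyW hyx hy2 hne)
      · intro u hu v hv
        rw [Finset.mem_singleton] at hu hv
        rw [hu, hv]
        exact (attachCliques H m).loopless.irrefl x
      · rw [del_eq]
        refine ih _ (Finset.erase_ssubset hxW) ?_
        intro v hv h0
        obtain ⟨w, hwW, hw1, hw2⟩ := hP v (Finset.mem_of_mem_erase hv) h0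
        exact ⟨w, Finset.mem_erase.mpr ⟨fun e => hw2 (by rw [e]; exact hx0), hwW⟩, hw1, hw2⟩
      · rw [link_eq H m W W' x hxW (Or.inl hx0) hW']
        have hss : W' ⊂ W := Finset.filter_ssubset.mpr ⟨x, hxW, fun h => h.1 rfl⟩
        refine ih _ hss ?_
        intro v hv h0
        obtain ⟨hvW, hv1, -⟩ := (hW' v).mp hv
        obtain ⟨w, hwW, hw1, hw2⟩ := hP v hvW h0
        exact ⟨w, (hW' w).mpr ⟨hwW, hw1 ▸ hv1, fun e => absurd e hw2⟩, hw1, hw2⟩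
    · push_neg at hA
      by_cases hB : ∃ x ∈ W, ∃ y ∈ W, y ≠ x ∧ y.1 = x.1
      · obtain ⟨x, hxW, y, hyW, hne, hyx⟩ := hB
        have hy2 := hA y hyW
        set W' : Finset (Σ i : Fin n, Fin (m i)) :=
          W.filter (fun v => v.1 ≠ x.1 ∧ ((v.2 : ℕ) = 0 → ¬ H.Adj x.1 v.1)) with hW'def
        have hW' : ∀ v, v ∈ W' ↔ v ∈ W ∧ v.1 ≠ x.1 ∧ ((v.2 : ℕ) = 0 → ¬ H.Adj x.1 v.1) := by
          intro v; simp [hW'def]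
        refine VertexDecomposable.step _ x ⟨Finset.singleton_subset_iff.mpr hxW, ?_⟩ ?_ ?_
          (shed H m W x y hyW hyx hy2 hne)
        · intro u hu v hv
          rw [Finset.mem_singleton] at hu hv
          rw [hu, hv]
          exact (attachCliques H m).loopless.irrefl x
        · rw [del_eq]
          refine ih _ (Finset.erase_ssubset hxW) ?_
          intro v hv h0
          exact absurd h0 (hA v (Finset.mem_of_mem_erase hv))
        · rw [link_eq H m W W' x hxW (Or.inr hA) hW']
          have hss : W' ⊂ W := Finset.filter_ssubset.mpr ⟨x, hxW, fun h => h.1 rfl⟩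
          refine ih _ hss ?_
          intro v hv h0
          exact absurd h0 (hA v ((hW' v).mp hv).1)
      · have heq : cx H m W = {F | F ⊆ W} := by
          ext F
          constructor
          · exact fun h => h.1
          · intro hF
            refine ⟨hF, fun u hu v hv hadj => ?_⟩
            rcases hadj with ⟨h1, h2⟩ | ⟨h1, -⟩
            · exact hB ⟨v, hF hv, u, hF hu, h2, h1⟩
            · exact hA u (hF hu) h1
        rw [heq]
        exact VertexDecomposable.simplex W

end Stmt18Aux

/-- the independence complex of a graph obtained by attaching a
complete graph `K_{mᵢ}` (with `mᵢ ≥ 2`) to each vertex `i` of an arbitrary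
graph `H` is vertex decomposable. -/
theorem stmt18 {n : ℕ} (H : SimpleGraph (Fin n)) (m : Fin n → ℕ)
    (hm : ∀ i : Fin n, 2 ≤ m i) :
    VertexDecomposable (indepComplex (attachCliques H m)) := by
  have heq : indepComplex (attachCliques H m) = Stmt18Aux.cx H m Finset.univ := by
    ext F
    exact ⟨fun h => ⟨Finset.subset_univ F, h⟩, fun h => h.2⟩
  rw [heq]
  refine Stmt18Aux.main H m Finset.univ ?_
  intro v _ _
  refine ⟨⟨v.1, ⟨1, hm v.1⟩⟩, Finset.mem_univ _, rfl, ?_⟩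
  simp
end
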